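/- arXiv:2001.06179 — 2 statements merged into one kernel-verified Lean document; each statement's English description precedes it below -/
import Mathlib

section
/- With respect to the orthogonal decomposition ℂ^{B_n(T_q)} = ℂ_rad^{B_n(T_q)} ⊕ (ℂ^{B_n(T_q)} ⊖ ℂ_rad^{B_n(T_q)}), every truncated branching-Toeplitz matrix Γ_q^{(n)}[f] is block diagonal (both the radial subspace and its orthogonal complement are invariant), and consequently ‖Γ_q^{(n)}[f]‖ = max( ‖T_n(f)‖, ‖Γ_q^{(n)}[f] restricted to the orthogonal complement of the radial subspace‖ ). -/
/-- Vertices of the rooted `q`-homogeneous tree, modelled as words over `Fin q`;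
the root is the empty word and the children of `w` are the words `k :: w`. -/
abbrev Vertex (q : ℕ) := List (Fin q)

/-- `σ` is an ancestor of `τ` (i.e. `σ ⪯ τ`): `τ = w ++ σ` for some word `w`. -/
def Anc {q : ℕ} (σ τ : Vertex q) : Prop := σ <:+ τ

/-- Two vertices are comparable (`(σ,τ) ∈ 𝒞`) if one is an ancestor of the other. -/
def Comp {q : ℕ} (σ τ : Vertex q) : Prop := σ <:+ τ ∨ τ <:+ σ

/-- Length of the longest common suffix, i.e. the generation of the last common
ancestor of the two vertices. -/
def lcs {q : ℕ} (σ τ : Vertex q) : ℕ :=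
  ((σ.reverse.zip τ.reverse).takeWhile (fun p => decide (p.1 = p.2))).length

/-- The graph distance on the rooted `q`-homogeneous tree. -/
def tdist {q : ℕ} (σ τ : Vertex q) : ℕ := (σ.length - lcs σ τ) + (τ.length - lcs σ τ)

instance {q : ℕ} (σ τ : Vertex q) : Decidable (Comp σ τ) :=
  inferInstanceAs (Decidable (σ <:+ τ ∨ τ <:+ σ))

/-- The branching-Toeplitz kernel
`Γ_q[f](σ₁,σ₂) = q^{-d(σ₁,σ₂)/2} · f̂(|σ₁|-|σ₂|) · 1_𝒞(σ₁,σ₂)` associated with a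
formal Fourier series with coefficients `f̂ : ℤ → ℂ`. -/
noncomputable def btKer {q : ℕ} (f : ℤ → ℂ) (σ₁ σ₂ : Vertex q) : ℂ :=
  if Comp σ₁ σ₂ then
    ((q : ℝ) ^ (-(tdist σ₁ σ₂ : ℝ) / 2) : ℝ) * f ((σ₁.length : ℤ) - σ₂.length) else 0

/-- The ball `B_n(T_q)` of vertices of generation at most `n`. -/
abbrev Ball (q n : ℕ) := {σ : Vertex q // σ.length ≤ n}

noncomputable instance (q n : ℕ) : Fintype (Ball q n) :=
  (List.finite_length_le (Fin q) n).fintype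

/-- The truncated branching-Toeplitz matrix `Γ_q^{(n)}[f]` on `B_n(T_q)`. -/
noncomputable def btMat (q n : ℕ) (f : ℤ → ℂ) : Matrix (Ball q n) (Ball q n) ℂ :=
  fun σ₁ σ₂ => btKer f σ₁.1 σ₂.1

/-- The standard Toeplitz matrix `T_n(f) = [f̂(k-l)]_{0 ≤ k,l ≤ n}`. -/
def toepMat (n : ℕ) (f : ℤ → ℂ) : Matrix (Fin (n + 1)) (Fin (n + 1)) ℂ :=
  fun k l => f ((k : ℤ) - (l : ℤ))

/-- The subspace of radial vectors in `ℂ^{B_n(T_q)}` (vectors constant on each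
sphere `S_k`), as a submodule of the Euclidean space on `B_n(T_q)`. -/
def radSub (q n : ℕ) : Submodule ℂ (EuclideanSpace ℂ (Ball q n)) where
  carrier := {v | ∀ σ τ : Ball q n, σ.1.length = τ.1.length → v σ = v τ}
  add_mem' := by
    intro a b ha hb σ τ h
    simp [ha σ τ h, hb σ τ h]
  zero_mem' := by intro σ τ h; simp
  smul_mem' := by
    intro c a ha σ τ h
    simp [ha σ τ h]

/-!
The normalised sphere indicators `q^{-l/2} 1_{S_l}` (the columns of `radialMatrix`) form an
orthonormal basis of the radial subspace, and `Γ` maps them according to `T_n(f)`: a vertex `σ` at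
level `k` is comparable with exactly `q^{(l-k)₊}` vertices of `S_l`, each at distance `|k-l|`,
and `q^{(l-k)₊} q^{-|k-l|/2} q^{-l/2} = q^{-k/2}`. Hence `Γ R = R T_n(f)` for `R = radialMatrix`,
so `Γ` leaves the radial subspace invariant and acts on it as `T_n(f)`. The adjoint `Γ[f̄]` has the
same property, so `Γ` also leaves the orthogonal complement invariant, and the norm of an operator
that is block diagonal for an orthogonal decomposition is the maximum of the norms of its blocks.
-/

open Finset
open scoped Matrix

namespace ContinuousLinearMap

variable {𝕜 E F : Type*}

theorem norm_comp_subtypeL_eq_of_intertwine [NontriviallyNormedField 𝕜] [NormedAddCommGroup E]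
    [NormedSpace 𝕜 E] [NormedAddCommGroup F] [NormedSpace 𝕜 F] {A : E →L[𝕜] E} {T : F →L[𝕜] F}
    {K : Submodule 𝕜 E} (U : F →ₗᵢ[𝕜] E) (hU : LinearMap.range U.toLinearMap = K)
    (hAU : ∀ y, A (U y) = U (T y)) :
    ‖A ∘L K.subtypeL‖ = ‖T‖ := by
  subst hU
  calc ‖A ∘L (LinearMap.range U.toLinearMap).subtypeL‖
      = ‖A ∘L (LinearMap.range U.toLinearMap).subtypeL ∘L (U.equivRange : F →L[𝕜] _)‖ :=
        (opNorm_comp_linearIsometryEquiv _ _).symm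
    _ = ‖U.toContinuousLinearMap ∘L T‖ := by congr 1; ext y; exact hAU y
    _ = ‖T‖ := U.norm_toContinuousLinearMap_comp

theorem norm_eq_max_of_mem_invtSubmodule [RCLike 𝕜] [NormedAddCommGroup E]
    [InnerProductSpace 𝕜 E] {A : E →L[𝕜] E} {K : Submodule 𝕜 E} [K.HasOrthogonalProjection]
    (hK : K ∈ Module.End.invtSubmodule (A : E →ₗ[𝕜] E))
    (hK' : Kᗮ ∈ Module.End.invtSubmodule (A : E →ₗ[𝕜] E)) :
    ‖A‖ = max ‖A ∘L K.subtypeL‖ ‖A ∘L Kᗮ.subtypeL‖ := by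
  set M := max ‖A ∘L K.subtypeL‖ ‖A ∘L Kᗮ.subtypeL‖
  have pythagoras {x y : E} (hx : x ∈ K) (hy : y ∈ Kᗮ) : ‖x + y‖ ^ 2 = ‖x‖ ^ 2 + ‖y‖ ^ 2 := by
    simpa only [sq] using norm_add_sq_eq_norm_sq_add_norm_sq_of_inner_eq_zero x y
      (K.inner_right_of_mem_orthogonal hx hy)
  have restrict_le (L : Submodule 𝕜 E) : ‖A ∘L L.subtypeL‖ ≤ ‖A‖ :=
    (A ∘L L.subtypeL).opNorm_le_bound (norm_nonneg A) fun v => A.le_opNorm v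
  refine le_antisymm (A.opNorm_le_bound (by positivity) fun v => ?_)
    (max_le (restrict_le K) (restrict_le Kᗮ))
  obtain ⟨x, hx, y, hy, rfl⟩ := K.exists_add_mem_mem_orthogonal v
  have hAx : ‖A x‖ ≤ M * ‖x‖ := ((A ∘L K.subtypeL).le_opNorm ⟨x, hx⟩).trans
    (mul_le_mul_of_nonneg_right (le_max_left _ _) (norm_nonneg x))
  have hAy : ‖A y‖ ≤ M * ‖y‖ := ((A ∘L Kᗮ.subtypeL).le_opNorm ⟨y, hy⟩).trans
    (mul_le_mul_of_nonneg_right (le_max_right _ _) (norm_nonneg y))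
  rw [← sq_le_sq₀ (norm_nonneg _) (by positivity), map_add,
    pythagoras (x := A x) (y := A y) (hK hx) (hK' hy), mul_pow, pythagoras hx hy]
  nlinarith [pow_le_pow_left₀ (norm_nonneg _) hAx 2, pow_le_pow_left₀ (norm_nonneg _) hAy 2]

end ContinuousLinearMap

open Matrix in
theorem Matrix.norm_toEuclideanLin_apply_of_conjTranspose_mul_self {𝕜 m n : Type*} [RCLike 𝕜]
    [Fintype m] [DecidableEq m] [Fintype n] [DecidableEq n] {R : Matrix m n 𝕜} (h : Rᴴ * R = 1)
    (y : EuclideanSpace 𝕜 n) : ‖toEuclideanLin R y‖ = ‖y‖ := by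
  refine (LinearMap.norm_map_iff_inner_map_map (toEuclideanLin R)).2 (fun x y => ?_) y
  rw [← LinearMap.adjoint_inner_left, ← toEuclideanLin_conjTranspose_eq_adjoint]
  congr 1
  change WithLp.toLp 2 (Rᴴ *ᵥ (R *ᵥ WithLp.ofLp x)) = x
  rw [mulVec_mulVec, h, one_mulVec]

theorem List.take_append_drop_of_suffix_or_suffix {α : Type*} {σ ρ : List α}
    (h : σ <:+ ρ ∨ ρ <:+ σ) :
    ρ.take (ρ.length - σ.length) ++ σ.drop (σ.length - ρ.length) = ρ := by
  rcases h with ⟨w, rfl⟩ | ⟨w, rfl⟩ <;> simp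

theorem List.length_takeWhile_zip_append {α : Type*} [DecidableEq α] (a c : List α) :
    ((a.zip (a ++ c)).takeWhile fun p => decide (p.1 = p.2)).length = a.length ∧
      (((a ++ c).zip a).takeWhile fun p => decide (p.1 = p.2)).length = a.length := by
  induction a with
  | nil => simp
  | cons x a ih => simpa [List.takeWhile_cons] using ih

section Tree

variable {q n : ℕ}

theorem lcs_of_comp {σ τ : Vertex q} (h : Comp σ τ) : lcs σ τ = min σ.length τ.length := by
  rcases h with ⟨w, rfl⟩ | ⟨w, rfl⟩ <;>
    simp [lcs, List.length_takeWhile_zip_append]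

theorem tdist_of_comp {σ τ : Vertex q} (h : Comp σ τ) :
    tdist σ τ = (σ.length - τ.length) + (τ.length - σ.length) := by
  rw [tdist, lcs_of_comp h]; omega

theorem btKer_of_comp (f : ℤ → ℂ) {σ τ : Vertex q} (h : Comp σ τ) :
    btKer f σ τ = ((q : ℝ) ^ (-(((σ.length - τ.length) + (τ.length - σ.length) : ℕ) : ℝ) / 2) : ℝ) *
      f ((σ.length : ℤ) - τ.length) := by
  rw [btKer, if_pos h, tdist_of_comp h]

def level (σ : Ball q n) : Fin (n + 1) := ⟨σ.1.length, Nat.lt_succ_of_le σ.2⟩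

theorem card_filter_level_comp (σ : Ball q n) (l : Fin (n + 1)) :
    #{ρ : Ball q n | level ρ = l ∧ Comp σ.1 ρ.1} = q ^ (l - σ.1.length) := by
  set k := σ.1.length
  -- A vertex of level `l` comparable with `σ` is `w ++ σ.drop (k - l)` with `|w| = l - k`,
  -- whether it lies above or below `σ`.
  let e : {ρ : Ball q n // level ρ = l ∧ Comp σ.1 ρ.1} ≃ List.Vector (Fin q) (l - k) :=
    { toFun ρ := ⟨ρ.1.1.take (l - k), by
        have : ρ.1.1.length = l := congrArg Fin.val ρ.2.1
        simp [this]⟩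
      invFun w := ⟨⟨w.1 ++ σ.1.drop (k - l), by simp [w.2]; omega⟩, by
        refine ⟨Fin.ext (by simp [level, w.2]; omega), ?_⟩
        show σ.1 <:+ w.1 ++ σ.1.drop (k - l) ∨ w.1 ++ σ.1.drop (k - l) <:+ σ.1
        by_cases hkl : k ≤ l
        · rw [Nat.sub_eq_zero_of_le hkl, List.drop_zero]
          exact Or.inl (List.suffix_append _ _)
        · have : w.1 = [] := List.length_eq_zero_iff.1 (by simp [w.2]; omega)
          rw [this, List.nil_append]
          exact Or.inr (List.drop_suffix _ _)⟩
      left_inv ρ := by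
        have : ρ.1.1.length = l := congrArg Fin.val ρ.2.1
        refine Subtype.ext (Subtype.ext ?_)
        simpa [this] using List.take_append_drop_of_suffix_or_suffix ρ.2.2
      right_inv w := Subtype.ext (List.take_left' w.2) }
  rw [← Fintype.card_subtype, Fintype.card_congr e, card_vector, Fintype.card_fin]

theorem card_filter_level (l : Fin (n + 1)) : #{ρ : Ball q n | level ρ = l} = q ^ (l : ℕ) := by
  simpa [Comp] using card_filter_level_comp (⟨[], Nat.zero_le n⟩ : Ball q n) l

noncomputable def radialWeight (q l : ℕ) : ℝ := (q : ℝ) ^ (-(l : ℝ) / 2)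

noncomputable def radialMatrix (q n : ℕ) : Matrix (Ball q n) (Fin (n + 1)) ℂ :=
  fun σ l => if level σ = l then (radialWeight q l : ℂ) else 0

theorem radialWeight_pos (hq : 0 < q) (l : ℕ) : 0 < radialWeight q l :=
  Real.rpow_pos_of_pos (Nat.cast_pos.2 hq) _

theorem pow_mul_radialWeight_sq (hq : 0 < q) (l : ℕ) : (q : ℝ) ^ l * radialWeight q l ^ 2 = 1 := by
  have hq' : (0 : ℝ) < q := Nat.cast_pos.2 hq
  rw [radialWeight, ← Real.rpow_natCast, ← Real.rpow_natCast, ← Real.rpow_mul hq'.le,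
    ← Real.rpow_add hq']
  norm_num

theorem pow_mul_rpow_mul_radialWeight (hq : 0 < q) (k l : ℕ) :
    (q : ℝ) ^ (l - k) * ((q : ℝ) ^ (-(((k - l) + (l - k) : ℕ) : ℝ) / 2) * radialWeight q l) =
      radialWeight q k := by
  have hq' : (0 : ℝ) < q := Nat.cast_pos.2 hq
  rw [radialWeight, radialWeight, ← Real.rpow_natCast, ← Real.rpow_add hq', ← Real.rpow_add hq']
  congr 1
  rcases le_total k l with h | h <;> simp [Nat.sub_eq_zero_of_le, h, Nat.cast_sub] <;> ring

theorem btMat_mul_radialMatrix (hq : 0 < q) (f : ℤ → ℂ) :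
    btMat q n f * radialMatrix q n = radialMatrix q n * toepMat n f := by
  ext σ l
  simp only [Matrix.mul_apply, radialMatrix, mul_ite, mul_zero, ite_mul, zero_mul,
    Finset.sum_ite_eq, Finset.mem_univ, if_true]
  set k := σ.1.length
  have hterm : ∀ ρ ∈ ({ρ | level ρ = l} : Finset (Ball q n)),
      btMat q n f σ ρ * radialWeight q l = if Comp σ.1 ρ.1 then
        ((q : ℝ) ^ (-(((k - l) + (l - k) : ℕ) : ℝ) / 2) : ℝ) * f ((k : ℤ) - l) *
          radialWeight q l else 0 := by
    intro ρ hρ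
    have hρl : ρ.1.length = l := congrArg Fin.val (Finset.mem_filter.1 hρ).2
    by_cases h : Comp σ.1 ρ.1
    · rw [if_pos h, btMat, btKer_of_comp f h, hρl]
    · rw [if_neg h, btMat, btKer, if_neg h, zero_mul]
  rw [← Finset.sum_filter, Finset.sum_congr rfl hterm, ← Finset.sum_filter, Finset.filter_filter,
    Finset.sum_const, card_filter_level_comp, nsmul_eq_mul]
  simp only [toepMat, level]
  rw [← pow_mul_rpow_mul_radialWeight hq k l]
  push_cast
  ring

theorem radialMatrix_conjTranspose_mul_self (hq : 0 < q) :
    (radialMatrix q n)ᴴ * radialMatrix q n = 1 := by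
  ext l m
  simp only [Matrix.mul_apply, Matrix.conjTranspose_apply, radialMatrix, Matrix.one_apply,
    apply_ite star, star_zero, RCLike.star_def, Complex.conj_ofReal, ite_mul, zero_mul,
    mul_ite, mul_zero]
  rcases eq_or_ne l m with rfl | hlm
  · rw [← Finset.sum_filter, Finset.sum_congr rfl fun σ hσ => if_pos (Finset.mem_filter.1 hσ).2,
      Finset.sum_const, card_filter_level, if_pos rfl, nsmul_eq_mul,
      ← Complex.ofReal_one, ← pow_mul_radialWeight_sq hq l]
    push_cast
    ring
  · refine (Finset.sum_eq_zero fun σ _ => ?_).trans (if_neg hlm).symm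
    split_ifs with h1 h2 <;> first | rfl | exact absurd (h1.symm.trans h2) hlm.symm

noncomputable def radialIsometry (hq : 0 < q) :
    EuclideanSpace ℂ (Fin (n + 1)) →ₗᵢ[ℂ] EuclideanSpace ℂ (Ball q n) where
  toLinearMap := Matrix.toEuclideanLin (radialMatrix q n)
  norm_map' := Matrix.norm_toEuclideanLin_apply_of_conjTranspose_mul_self
    (radialMatrix_conjTranspose_mul_self hq)

theorem radialIsometry_apply (hq : 0 < q) (y : EuclideanSpace ℂ (Fin (n + 1))) (σ : Ball q n) :
    radialIsometry hq y σ = radialWeight q (level σ) * y (level σ) := by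
  simp [radialIsometry, Matrix.mulVec, dotProduct, radialMatrix, ite_mul]

theorem range_radialIsometry (hq : 0 < q) :
    LinearMap.range (radialIsometry (n := n) hq).toLinearMap = radSub q n := by
  ext v
  constructor
  · rintro ⟨y, rfl⟩ σ τ h
    simp only [LinearIsometry.coe_toLinearMap, radialIsometry_apply,
      show level σ = level τ from Fin.ext h]
  · intro hv
    let sphereRep (l : Fin (n + 1)) : Ball q n :=
      ⟨List.replicate l ⟨0, hq⟩, by simpa using Nat.lt_succ_iff.1 l.2⟩
    refine ⟨WithLp.toLp 2 fun l => (radialWeight q l : ℂ)⁻¹ * v (sphereRep l), ?_⟩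
    ext σ
    rw [LinearIsometry.coe_toLinearMap, radialIsometry_apply, WithLp.ofLp_toLp,
      mul_inv_cancel_left₀ (by exact_mod_cast (radialWeight_pos hq _).ne')]
    exact hv _ σ (by simp [sphereRep, level])

theorem toEuclideanCLM_btMat_radialIsometry (hq : 0 < q) (f : ℤ → ℂ)
    (y : EuclideanSpace ℂ (Fin (n + 1))) :
    Matrix.toEuclideanCLM (𝕜 := ℂ) (btMat q n f) (radialIsometry hq y) =
      radialIsometry hq (Matrix.toEuclideanCLM (𝕜 := ℂ) (toepMat n f) y) := by
  change WithLp.toLp 2 (btMat q n f *ᵥ (radialMatrix q n *ᵥ y.ofLp)) =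
    WithLp.toLp 2 (radialMatrix q n *ᵥ (toepMat n f *ᵥ y.ofLp))
  rw [Matrix.mulVec_mulVec, Matrix.mulVec_mulVec, btMat_mul_radialMatrix hq]

theorem radSub_mem_invtSubmodule_btMat (hq : 0 < q) (f : ℤ → ℂ) :
    radSub q n ∈ Module.End.invtSubmodule
      (Matrix.toEuclideanCLM (𝕜 := ℂ) (btMat q n f) : _ →ₗ[ℂ] _) := by
  rw [Module.End.mem_invtSubmodule_iff_forall_mem_of_mem, ← range_radialIsometry hq]
  rintro _ ⟨y, rfl⟩
  exact ⟨_, (toEuclideanCLM_btMat_radialIsometry hq f y).symm⟩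

theorem btMat_conjTranspose (f : ℤ → ℂ) :
    (btMat q n f)ᴴ = btMat q n (fun m => star (f (-m))) := by
  ext σ τ
  simp only [Matrix.conjTranspose_apply, btMat, btKer]
  have hcomm : Comp τ.1 σ.1 ↔ Comp σ.1 τ.1 := or_comm
  by_cases h : Comp σ.1 τ.1
  · rw [if_pos (hcomm.2 h), if_pos h, star_mul', tdist_of_comp h, tdist_of_comp (hcomm.2 h),
      add_comm, neg_sub, Complex.star_def, Complex.conj_ofReal]
  · rw [if_neg (mt hcomm.1 h), if_neg h, star_zero]

end Tree

theorem btMat_block_diagonal_general (q n : ℕ) (hq : 2 ≤ q) (f : ℤ → ℂ) :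
    (∀ v ∈ radSub q n, Matrix.toEuclideanCLM (𝕜 := ℂ) (btMat q n f) v ∈ radSub q n) ∧
    (∀ v ∈ (radSub q n)ᗮ,
      Matrix.toEuclideanCLM (𝕜 := ℂ) (btMat q n f) v ∈ (radSub q n)ᗮ) ∧
    ‖Matrix.toEuclideanCLM (𝕜 := ℂ) (btMat q n f)‖ =
      max ‖Matrix.toEuclideanCLM (𝕜 := ℂ) (toepMat n f)‖
        ‖(Matrix.toEuclideanCLM (𝕜 := ℂ) (btMat q n f)).comp
          ((radSub q n)ᗮ).subtypeL‖ := by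
  have hq0 : 0 < q := by omega
  have hrad := radSub_mem_invtSubmodule_btMat (n := n) hq0 f
  have hperp : (radSub q n)ᗮ ∈ Module.End.invtSubmodule
      (Matrix.toEuclideanCLM (𝕜 := ℂ) (btMat q n f) : _ →ₗ[ℂ] _) := by
    refine ContinuousLinearMap.orthogonal_mem_invtSubmodule ?_
    rw [← ContinuousLinearMap.star_eq_adjoint, ← map_star, Matrix.star_eq_conjTranspose,
      btMat_conjTranspose]
    exact radSub_mem_invtSubmodule_btMat hq0 _
  refine ⟨hrad, hperp, ?_⟩
  rw [ContinuousLinearMap.norm_eq_max_of_mem_invtSubmodule hrad hperp,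
    ContinuousLinearMap.norm_comp_subtypeL_eq_of_intertwine (radialIsometry hq0)
      (range_radialIsometry hq0) (toEuclideanCLM_btMat_radialIsometry hq0 f)]

/-- `Γ_q^{(n)}[f]` is block diagonal with respect to the
decomposition of `ℂ^{B_n(T_q)}` into the radial subspace and its orthogonal
complement, and `‖Γ_q^{(n)}[f]‖` is the maximum of `‖T_n(f)‖` and the norm of the
restriction of `Γ_q^{(n)}[f]` to the orthogonal complement of the radial
subspace. -/
theorem btMat_block_diagonal (q n : ℕ) (hq : 2 ≤ q) (hn : 1 ≤ n) (f : ℤ → ℂ) :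
    (∀ v ∈ radSub q n, Matrix.toEuclideanCLM (𝕜 := ℂ) (btMat q n f) v ∈ radSub q n) ∧
    (∀ v ∈ (radSub q n)ᗮ,
      Matrix.toEuclideanCLM (𝕜 := ℂ) (btMat q n f) v ∈ (radSub q n)ᗮ) ∧
    ‖Matrix.toEuclideanCLM (𝕜 := ℂ) (btMat q n f)‖ =
      max ‖Matrix.toEuclideanCLM (𝕜 := ℂ) (toepMat n f)‖
        ‖(Matrix.toEuclideanCLM (𝕜 := ℂ) (btMat q n f)).comp
          ((radSub q n)ᗮ).subtypeL‖ :=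
  btMat_block_diagonal_general q n hq f
end

section
/- Let μ be a finite positive measure on the circle 𝕋. Then for every integer q ≥ 2, the branching-Toeplitz kernel Γ_q[μ](σ₁, σ₂) = q^{-d(σ₁,σ₂)/2} · \hat{μ}(|σ₁| - |σ₂|) · 1_𝒞(σ₁, σ₂) is positive definite on T_q, where \hat{μ}(n) = ∫_𝕋 e^{-inθ} dμ(θ). (Sufficiency direction of the positive definiteness criterion for branching-Toeplitz kernels.) -/
open MeasureTheory
open scoped ComplexOrder

/-!
The kernel is the entrywise product of two positive semidefinite kernels, so the Schur product
theorem applies. The Toeplitz factor `μ̂(|σ| - |τ|)` has quadratic form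
`∫ |∑ c_τ e^{i|τ|θ}|² dμ(θ)`. On vertices of generation at most `N`, the tree factor
`q^{-d(σ,τ)/2} 1_𝒞(σ,τ)` is the Gram matrix of the vectors `w ↦ q^{-(N-|σ|)/2} 1[σ ⪯ w]` indexed
by the vertices `w` of generation `N`: two vertices have a common descendant in generation `N` iff
they are comparable, and if `σ ⪯ τ` there are `q^{N-|τ|}` of them.
-/

open Finset

namespace Matrix

variable {ι R : Type*} [Ring R] [PartialOrder R] [StarRing R] {M : Matrix ι ι R}

lemma posSemidef_of_forall_finset_submatrix
    (h : ∀ s : Finset ι, (M.submatrix ((↑) : s → ι) (↑)).PosSemidef) : M.PosSemidef := by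
  classical
  refine ⟨?_, fun x => ?_⟩
  · ext i j
    exact (h {i, j}).isHermitian.apply ⟨i, by simp⟩ ⟨j, by simp⟩
  · simpa [Finsupp.sum, ← sum_attach x.support, ← subtype_mem_eq_attach,
      ← Finsupp.subtypeDomain_apply, ← Finsupp.support_subtypeDomain] using (h x.support).2 _

lemma PosSemidef.sum_sum_nonneg (hM : M.PosSemidef) (s : Finset ι) (c : ι → R) :
    0 ≤ ∑ i ∈ s, ∑ j ∈ s, star (c i) * M i j * c j := by
  have := (hM.submatrix ((↑) : s → ι)).dotProduct_mulVec_nonneg fun i => c i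
  simp only [dotProduct, mulVec, submatrix_apply, Pi.star_apply, mul_sum] at this
  simpa only [← sum_coe_sort s, mul_assoc] using this

end Matrix

section Tree

variable {q : ℕ}

lemma length_takeWhile_zip_self_append {α : Type*} [DecidableEq α] (l t : List α) :
    ((l.zip (l ++ t)).takeWhile fun p => decide (p.1 = p.2)).length = l.length := by
  induction l with
  | nil => simp
  | cons a l ih => simpa using ih

lemma lcs_comm (σ τ : Vertex q) : lcs σ τ = lcs τ σ := by
  rw [lcs, lcs, ← List.zip_swap, List.takeWhile_map, List.length_map]
  congr 2
  ext p
  simp [eq_comm]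

lemma tdist_comm (σ τ : Vertex q) : tdist σ τ = tdist τ σ := by
  rw [tdist, tdist, lcs_comm, add_comm]

lemma lcs_of_suffix {σ τ : Vertex q} (h : σ <:+ τ) : lcs σ τ = σ.length := by
  obtain ⟨u, rfl⟩ := h
  rw [lcs, List.reverse_append, length_takeWhile_zip_self_append, List.length_reverse]

lemma tdist_of_suffix {σ τ : Vertex q} (h : σ <:+ τ) :
    tdist σ τ = τ.length - σ.length := by
  rw [tdist, lcs_of_suffix h, Nat.sub_self, zero_add]

lemma card_filter_suffix {N : ℕ} {τ : Vertex q} (hτ : τ.length ≤ N) :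
    #{w : List.Vector (Fin q) N | τ <:+ w.toList} = q ^ (N - τ.length) := by
  suffices #{w : List.Vector (Fin q) N | τ <:+ w.toList} =
      #(univ : Finset (List.Vector (Fin q) (N - τ.length))) by simpa
  refine card_bij' (fun w _ => ⟨w.toList.take (N - τ.length), by simp⟩)
    (fun u _ => ⟨u.toList ++ τ, by simp [Nat.sub_add_cancel hτ]⟩)
    (fun _ _ => mem_univ _) (fun _ _ => mem_filter.mpr ⟨mem_univ _, List.suffix_append _ _⟩)
    (fun w hw => ?_) (fun u _ => ?_)
  · have h := List.suffix_iff_eq_append.mp (mem_filter.mp hw).2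
    exact List.Vector.eq _ _ (by simpa using h)
  · obtain ⟨l, hl⟩ := u
    exact List.Vector.eq _ _ (by simp [← hl])

noncomputable def leafWeight (q N : ℕ) (σ : Vertex q) (w : List.Vector (Fin q) N) : ℝ :=
  if σ <:+ w.toList then (q : ℝ) ^ (-((N : ℝ) - σ.length) / 2) else 0

lemma sum_leafWeight_mul_of_suffix {N : ℕ} (hq : 0 < q) {σ τ : Vertex q} (h : σ <:+ τ)
    (hτ : τ.length ≤ N) :
    ∑ w, leafWeight q N σ w * leafWeight q N τ w = (q : ℝ) ^ (-(tdist σ τ : ℝ) / 2) := by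
  have hterm : ∀ w : List.Vector (Fin q) N, leafWeight q N σ w * leafWeight q N τ w =
      if τ <:+ w.toList then
        (q : ℝ) ^ (-((N : ℝ) - σ.length) / 2) * (q : ℝ) ^ (-((N : ℝ) - τ.length) / 2)
      else 0 := by
    intro w
    by_cases hw : τ <:+ w.toList
    · simp [leafWeight, hw, h.trans hw]
    · simp [leafWeight, hw]
  have hq' : (0 : ℝ) < q := by exact_mod_cast hq
  rw [sum_congr rfl fun w _ => hterm w, sum_ite, sum_const_zero, add_zero, sum_const,
    card_filter_suffix hτ, nsmul_eq_mul, Nat.cast_pow, ← Real.rpow_natCast,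
    ← Real.rpow_add hq', ← Real.rpow_add hq', tdist_of_suffix h,
    Nat.cast_sub hτ, Nat.cast_sub h.length_le]
  congr 1
  ring

lemma sum_leafWeight_mul {N : ℕ} (hq : 0 < q) {σ τ : Vertex q} (hσ : σ.length ≤ N)
    (hτ : τ.length ≤ N) :
    ∑ w, leafWeight q N σ w * leafWeight q N τ w =
      if Comp σ τ then (q : ℝ) ^ (-(tdist σ τ : ℝ) / 2) else 0 := by
  split_ifs with hC
  · rcases hC with h | h
    · exact sum_leafWeight_mul_of_suffix hq h hτ
    · simp_rw [mul_comm (leafWeight q N σ _), tdist_comm σ]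
      exact sum_leafWeight_mul_of_suffix hq h hσ
  · refine sum_eq_zero fun w _ => ?_
    by_cases hσw : σ <:+ w.toList <;> by_cases hτw : τ <:+ w.toList
    · exact absurd (List.suffix_or_suffix_of_suffix hσw hτw) hC
    all_goals simp [leafWeight, hσw, hτw]

noncomputable def treeKernel (q : ℕ) : Matrix (Vertex q) (Vertex q) ℂ :=
  Matrix.of fun σ τ => if Comp σ τ then (((q : ℝ) ^ (-(tdist σ τ : ℝ) / 2) : ℝ) : ℂ) else 0

lemma treeKernel_posSemidef (hq : 0 < q) : (treeKernel q).PosSemidef := by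
  refine Matrix.posSemidef_of_forall_finset_submatrix fun s => ?_
  set N := s.sup List.length
  let A : Matrix s (List.Vector (Fin q) N) ℂ := Matrix.of fun σ w => leafWeight q N σ w
  convert Matrix.posSemidef_self_mul_conjTranspose A using 1
  ext σ τ
  have h := sum_leafWeight_mul hq (le_sup σ.2 : σ.1.length ≤ N) (le_sup τ.2)
  calc treeKernel q σ τ = ((∑ w, leafWeight q N σ w * leafWeight q N τ w : ℝ) : ℂ) := by
        rw [h, treeKernel, Matrix.of_apply, apply_ite Complex.ofReal, Complex.ofReal_zero]
    _ = (A * A.conjTranspose) σ τ := by simp [A, Matrix.mul_apply]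

end Tree

section FourierCoeff

open ComplexConjugate

variable {T : ℝ}

noncomputable def measureFourierCoeff (μ : Measure (AddCircle T)) (n : ℤ) : ℂ :=
  ∫ θ, fourier (-n) θ ∂μ

lemma conj_measureFourierCoeff (μ : Measure (AddCircle T)) (n : ℤ) :
    conj (measureFourierCoeff μ n) = measureFourierCoeff μ (-n) := by
  simp only [measureFourierCoeff, ← integral_conj, ← fourier_neg]

variable (μ : Measure (AddCircle T)) [IsFiniteMeasure μ]

lemma integrable_fourier (n : ℤ) : Integrable (fourier n : AddCircle T → ℂ) μ :=
  Integrable.of_bound (map_continuous _).aestronglyMeasurable 1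
    (Filter.Eventually.of_forall fun _ => (Circle.norm_coe _).le)

lemma sum_sum_conj_mul_measureFourierCoeff_mul {ι : Type*} (s : Finset ι) (n : ι → ℤ)
    (c : ι → ℂ) :
    ∑ i ∈ s, ∑ j ∈ s, conj (c i) * measureFourierCoeff μ (n i - n j) * c j =
      ∫ θ, Complex.normSq (∑ j ∈ s, c j * fourier (n j) θ) ∂μ := by
  have hexpand : ∀ θ : AddCircle T, (Complex.normSq (∑ j ∈ s, c j * fourier (n j) θ) : ℂ) =
      ∑ i ∈ s, ∑ j ∈ s, conj (c i) * c j * fourier (-(n i - n j)) θ := by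
    intro θ
    rw [Complex.normSq_eq_conj_mul_self, map_sum, sum_mul_sum]
    refine sum_congr rfl fun i _ => sum_congr rfl fun j _ => ?_
    rw [neg_sub, sub_eq_neg_add, fourier_add, fourier_neg, map_mul]
    ring
  rw [← integral_complex_ofReal, integral_congr_ae (Filter.Eventually.of_forall hexpand),
    integral_finsetSum _ fun i _ => integrable_finsetSum _ fun j _ =>
      (integrable_fourier μ _).const_mul _]
  refine sum_congr rfl fun i _ => ?_
  rw [integral_finsetSum _ fun j _ => (integrable_fourier μ _).const_mul _]
  refine sum_congr rfl fun j _ => ?_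
  rw [integral_const_mul, measureFourierCoeff]
  ring

lemma posSemidef_measureFourierCoeff {ι : Type*} (n : ι → ℤ) :
    (Matrix.of fun i j => measureFourierCoeff μ (n i - n j)).PosSemidef := by
  refine ⟨?_, fun x => ?_⟩
  · ext i j
    simp [conj_measureFourierCoeff]
  · simp only [Finsupp.sum, Matrix.of_apply, Complex.star_def]
    rw [sum_sum_conj_mul_measureFourierCoeff_mul, Complex.zero_le_real]
    exact integral_nonneg fun θ => Complex.normSq_nonneg _

end FourierCoeff

/-- For every finite positive Radon measure `μ` on the circle
`𝕋 = ℝ/2πℤ` and every `q ≥ 2`, the branching-Toeplitz kernel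
`Γ_q[μ](σ₁,σ₂) = q^{-d(σ₁,σ₂)/2} · μ̂(|σ₁|-|σ₂|) · 1_𝒞(σ₁,σ₂)`, where
`μ̂(n) = ∫_𝕋 e^{-inθ} dμ(θ)`, is positive definite on `T_q`. -/
theorem btKer_measure_posDef (q : ℕ) (hq : 2 ≤ q)
    (μ : Measure (AddCircle (2 * Real.pi))) [IsFiniteMeasure μ]
    (s : Finset (Vertex q)) (c : Vertex q → ℂ) :
    0 ≤ ∑ σ ∈ s, ∑ τ ∈ s, starRingEnd ℂ (c σ) *
        (if Comp σ τ then
          ((q : ℝ) ^ (-(tdist σ τ : ℝ) / 2) : ℝ) *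
            ∫ θ, fourier (-((σ.length : ℤ) - (τ.length : ℤ))) θ ∂μ
        else 0) * c τ := by
  have hΓ := (treeKernel_posSemidef (by omega : 0 < q)).hadamard
    (posSemidef_measureFourierCoeff μ fun σ : Vertex q => (σ.length : ℤ))
  refine (hΓ.sum_sum_nonneg s c).trans_eq (sum_congr rfl fun σ _ => sum_congr rfl fun τ _ => ?_)
  simp only [Matrix.hadamard_apply, treeKernel, Matrix.of_apply, measureFourierCoeff, ite_mul,
    zero_mul, Complex.star_def]
end
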